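/- arXiv:1202.6049 — 2 statements merged into one kernel-verified Lean document; each statement's English description precedes it below -/
import Mathlib

section
/- If ρ((jωE − A_D − GC)^{-1} A_C) < 1 for all ω ∈ ℝ and the pencil (E, A_D + GC) is regular and Hurwitz, then the pencil (E, A_D + A_C + GC) has no generalized eigenvalues on the imaginary axis. -/
open Matrix

/-! At `s = jω` the perturbed pencil factors as `M (1 - M⁻¹ A_C)` with `M = jωE - A_D - GC`.
`M` is invertible because the nominal pencil is Hurwitz, and `1 - M⁻¹ A_C` is invertible because
every eigenvalue of `M⁻¹ A_C` has modulus less than `1`. -/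

theorem Matrix.isUnit_sub_of_one_notMem_spectrum {K ι : Type*} [CommRing K] [Fintype ι]
    [DecidableEq ι] {M A : Matrix ι ι K} (hM : IsUnit M) (h : 1 ∉ spectrum K (M⁻¹ * A)) :
    IsUnit (M - A) := by
  have hfactor : M - A = M * (1 - M⁻¹ * A) := by
    rw [mul_sub, mul_one, ← mul_assoc, mul_nonsing_inv M ((isUnit_iff_isUnit_det M).1 hM),
      one_mul]
  rw [spectrum.notMem_iff, map_one] at h
  rw [hfactor]
  exact hM.mul h

theorem stmt11_general {n p : ℕ}
    (E AD AC : Matrix (Fin n) (Fin n) ℝ)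
    (G : Matrix (Fin n) (Fin p) ℝ) (C : Matrix (Fin p) (Fin n) ℝ)
    (hHurwitz : ∀ s : ℂ,
      (s • E.map Complex.ofReal -
        (AD.map Complex.ofReal + G.map Complex.ofReal * C.map Complex.ofReal)).det = 0 →
      s.re < 0)
    (hρ : ∀ ω : ℝ, ∀ μ ∈ spectrum ℂ
        (((Complex.I * ω) • E.map Complex.ofReal -
            AD.map Complex.ofReal -
            G.map Complex.ofReal * C.map Complex.ofReal)⁻¹ *
          AC.map Complex.ofReal), ‖μ‖ < 1) :
    ∀ ω : ℝ,
      ((Complex.I * ω) • E.map Complex.ofReal -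
        (AD.map Complex.ofReal + AC.map Complex.ofReal +
          G.map Complex.ofReal * C.map Complex.ofReal)).det ≠ 0 := by
  intro ω
  have hNominal : IsUnit ((Complex.I * ω) • E.map Complex.ofReal -
      AD.map Complex.ofReal - G.map Complex.ofReal * C.map Complex.ofReal) := by
    rw [isUnit_iff_isUnit_det, isUnit_iff_ne_zero, sub_sub]
    intro hdet
    simpa using hHurwitz _ hdet
  have hOne : (1 : ℂ) ∉ spectrum ℂ _ := fun h ↦ by simpa using hρ ω 1 h
  have hPerturbed := isUnit_sub_of_one_notMem_spectrum hNominal hOne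
  rw [isUnit_iff_isUnit_det, isUnit_iff_ne_zero] at hPerturbed
  convert hPerturbed using 2
  abel

/-- If the pencil `(E, A_D + GC)` is regular and Hurwitz and
`ρ((jωE − A_D − GC)⁻¹ A_C) < 1` for all real `ω`, then the pencil
`(E, A_D + A_C + GC)` has no generalized eigenvalues on the imaginary axis. -/
theorem stmt11 {n p : ℕ}
    (E AD AC : Matrix (Fin n) (Fin n) ℝ)
    (G : Matrix (Fin n) (Fin p) ℝ) (C : Matrix (Fin p) (Fin n) ℝ)
    (hreg : ∃ s : ℂ,
      (s • E.map Complex.ofReal -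
        (AD.map Complex.ofReal + G.map Complex.ofReal * C.map Complex.ofReal)).det ≠ 0)
    (hHurwitz : ∀ s : ℂ,
      (s • E.map Complex.ofReal -
        (AD.map Complex.ofReal + G.map Complex.ofReal * C.map Complex.ofReal)).det = 0 →
      s.re < 0)
    (hρ : ∀ ω : ℝ, ∀ μ ∈ spectrum ℂ
        (((Complex.I * ω) • E.map Complex.ofReal -
            AD.map Complex.ofReal -
            G.map Complex.ofReal * C.map Complex.ofReal)⁻¹ *
          AC.map Complex.ofReal), ‖μ‖ < 1) :
    ∀ ω : ℝ,
      ((Complex.I * ω) • E.map Complex.ofReal -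
        (AD.map Complex.ofReal + AC.map Complex.ofReal +
          G.map Complex.ofReal * C.map Complex.ofReal)).det ≠ 0 :=
  stmt11_general E AD AC G C hHurwitz hρ
end

section
/- Let V* be the largest (A, B)-controlled invariant subspace contained in Ker(C): i.e., V* is the maximal subspace V with A V ⊆ V + Im(B) and V ⊆ Ker(C). Then for every x₀ ∈ V* there exists a feedback matrix F with (A + BF)V* ⊆ V* and V* ⊆ Ker C, so that the solution x(t) = e^{(A+BF)t} x₀ satisfies C x(t) = 0 for all t ≥ 0. -/
/-!
Modulo `V`, the restriction of `A` to `V` takes values in the image of `B`, so it lifts linearly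
through `B`; extending minus that lift from `V` to the whole space gives a friend `F`, i.e.
`(A + B F) V ⊆ V`. The matrices preserving `V` form a closed subalgebra, which therefore contains
`exp (t • (A + B F))`; so the trajectory stays in `V ⊆ Ker C`.
-/

open Matrix

attribute [local instance] Matrix.linftyOpNormedRing Matrix.linftyOpNormedAlgebra

theorem Submodule.exists_map_add_comp_le_of_map_le_sup {K E U : Type*} [DivisionRing K]
    [AddCommGroup E] [Module K E] [AddCommGroup U] [Module K U]
    {f : E →ₗ[K] E} {g : U →ₗ[K] E} {V : Submodule K E}
    (h : V.map f ≤ V ⊔ LinearMap.range g) :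
    ∃ k : E →ₗ[K] U, V.map (f + g ∘ₗ k) ≤ V := by
  have hf : ∀ v : V, V.mkQ (f v) ∈ LinearMap.range (V.mkQ ∘ₗ g) := by
    intro v
    obtain ⟨w, hw, _, ⟨u, rfl⟩, hwu⟩ := Submodule.mem_sup.mp (h ⟨v, v.2, rfl⟩)
    exact ⟨u, by simp [← hwu, (Submodule.Quotient.mk_eq_zero V).mpr hw]⟩
  obtain ⟨l, hl⟩ := Module.projective_lifting_property (V.mkQ ∘ₗ g).rangeRestrict
    ((V.mkQ ∘ₗ f ∘ₗ V.subtype).codRestrict _ hf) (V.mkQ ∘ₗ g).surjective_rangeRestrict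
  obtain ⟨k, hk⟩ := LinearMap.exists_extend (-l)
  refine ⟨k, ?_⟩
  rintro _ ⟨v, hv, rfl⟩
  have hlv : (Submodule.Quotient.mk (g (l ⟨v, hv⟩)) : E ⧸ V) = Submodule.Quotient.mk (f v) :=
    Subtype.ext_iff.mp (LinearMap.congr_fun hl ⟨v, hv⟩)
  have hkv : k v = -l ⟨v, hv⟩ := LinearMap.congr_fun hk ⟨v, hv⟩
  rw [← Submodule.Quotient.mk_eq_zero]
  simp [hkv, hlv]

theorem Matrix.exists_map_add_mul_le_of_map_le_sup {K n m : Type*} [Field K] [Fintype n]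
    [DecidableEq n] [Fintype m] {A : Matrix n n K} {B : Matrix n m K} {V : Submodule K (n → K)}
    (h : V.map A.mulVecLin ≤ V ⊔ LinearMap.range B.mulVecLin) :
    ∃ F : Matrix m n K, V.map (A + B * F).mulVecLin ≤ V := by
  obtain ⟨k, hk⟩ := Submodule.exists_map_add_comp_le_of_map_le_sup h
  refine ⟨LinearMap.toMatrix' k, ?_⟩
  rwa [Matrix.mulVecLin_add, Matrix.mulVecLin_mul, ← Matrix.toLin'_apply' (LinearMap.toMatrix' k),
    Matrix.toLin'_toMatrix']

def Submodule.mulVecStabilizer {R n : Type*} [CommRing R] [Fintype n] [DecidableEq n]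
    (V : Submodule R (n → R)) : Subalgebra R (Matrix n n R) where
  carrier := {M | ∀ x ∈ V, M *ᵥ x ∈ V}
  mul_mem' hM hN x hx := by rw [← Matrix.mulVec_mulVec]; exact hM _ (hN x hx)
  add_mem' hM hN x hx := by rw [Matrix.add_mulVec]; exact V.add_mem (hM x hx) (hN x hx)
  algebraMap_mem' r x hx := by
    rw [Algebra.algebraMap_eq_smul_one, Matrix.smul_mulVec, Matrix.one_mulVec]
    exact V.smul_mem r hx

theorem Submodule.isClosed_mulVecStabilizer {R n : Type*} [CommRing R] [TopologicalSpace R]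
    [IsTopologicalRing R] [Fintype n] [DecidableEq n] {V : Submodule R (n → R)}
    (hV : IsClosed (V : Set (n → R))) : IsClosed (V.mulVecStabilizer : Set (Matrix n n R)) := by
  have hset : (V.mulVecStabilizer : Set (Matrix n n R)) = ⋂ x ∈ V, (· *ᵥ x) ⁻¹' V := by
    ext M; simp [Submodule.mulVecStabilizer]
  rw [hset]
  exact isClosed_biInter fun x _ => hV.preimage (continuous_id.matrix_mulVec continuous_const)

theorem Matrix.exp_mulVec_mem {𝕜 n : Type*} [RCLike 𝕜] [Fintype n] [DecidableEq n]
    {V : Submodule 𝕜 (n → 𝕜)} {M : Matrix n n 𝕜} (hM : ∀ x ∈ V, M *ᵥ x ∈ V) {x : n → 𝕜}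
    (hx : x ∈ V) : NormedSpace.exp M *ᵥ x ∈ V :=
  NormedSpace.exp_mem (R := 𝕜) (s := V.mulVecStabilizer)
    (Submodule.isClosed_mulVecStabilizer V.closed_of_finiteDimensional) hM x hx

theorem stmt17_general {n m p : ℕ}
    (A : Matrix (Fin n) (Fin n) ℝ) (B : Matrix (Fin n) (Fin m) ℝ)
    (C : Matrix (Fin p) (Fin n) ℝ)
    (Vstar : Submodule ℝ (Fin n → ℝ))
    (hinv : Submodule.map A.mulVecLin Vstar ≤ Vstar ⊔ LinearMap.range B.mulVecLin)
    (hker : Vstar ≤ LinearMap.ker C.mulVecLin) :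
    ∀ x₀ ∈ Vstar, ∃ F : Matrix (Fin m) (Fin n) ℝ,
      Submodule.map (A + B * F).mulVecLin Vstar ≤ Vstar ∧
      Vstar ≤ LinearMap.ker C.mulVecLin ∧
      ∀ t : ℝ, 0 ≤ t →
        C *ᵥ ((NormedSpace.exp (t • (A + B * F))) *ᵥ x₀) = 0 := by
  intro x₀ hx₀
  obtain ⟨F, hF⟩ := Matrix.exists_map_add_mul_le_of_map_le_sup hinv
  refine ⟨F, hF, hker, fun t _ => hker ?_⟩
  have hstab : A + B * F ∈ Vstar.mulVecStabilizer := fun x hx => hF ⟨x, hx, rfl⟩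
  exact Matrix.exp_mulVec_mem (Vstar.mulVecStabilizer.smul_mem hstab t) hx₀

/-- For the maximal `(A,B)`-controlled invariant subspace `V*` contained in
`Ker C`, every initial state `x₀ ∈ V*` admits a friend `F` with
`(A + BF) V* ⊆ V*`, `V* ⊆ Ker C`, and the resulting closed-loop trajectory
`x(t) = e^{(A+BF)t} x₀` produces zero output for all `t ≥ 0`. -/
theorem stmt17 {n m p : ℕ}
    (A : Matrix (Fin n) (Fin n) ℝ) (B : Matrix (Fin n) (Fin m) ℝ)
    (C : Matrix (Fin p) (Fin n) ℝ)
    (Vstar : Submodule ℝ (Fin n → ℝ))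
    (hinv : Submodule.map A.mulVecLin Vstar ≤ Vstar ⊔ LinearMap.range B.mulVecLin)
    (hker : Vstar ≤ LinearMap.ker C.mulVecLin)
    (hmax : ∀ V : Submodule ℝ (Fin n → ℝ),
      Submodule.map A.mulVecLin V ≤ V ⊔ LinearMap.range B.mulVecLin →
      V ≤ LinearMap.ker C.mulVecLin → V ≤ Vstar) :
    ∀ x₀ ∈ Vstar, ∃ F : Matrix (Fin m) (Fin n) ℝ,
      Submodule.map (A + B * F).mulVecLin Vstar ≤ Vstar ∧
      Vstar ≤ LinearMap.ker C.mulVecLin ∧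
      ∀ t : ℝ, 0 ≤ t →
        C *ᵥ ((NormedSpace.exp (t • (A + B * F))) *ᵥ x₀) = 0 :=
  stmt17_general A B C Vstar hinv hker
end
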